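/- Let C_S be a set code of length n over Σ_q correcting t deletions and let C_SD ⊆ S_n be a permutation code of length n correcting t stable deletions. Then C_2 = Φ^{-1}(C_S × C_SD) ⊆ M_q^n is a code correcting t deletions, and |C_2| = |C_S| · |C_SD|. -/
import Mathlib


/-- The induced permutation of a tuple `x` with pairwise distinct entries:
`inducedPerm x i` is the (0-indexed) rank of `x i` among the entries of `x`,
i.e. the inverse of the sorting permutation. -/
def inducedPerm {n : ℕ} {α : Type*} [LinearOrder α] (x : Fin n → α) : Equiv.Perm (Fin n) :=
  (Tuple.sort x)⁻¹

/-- `IsSubseq y x` : the sequence `y` is obtained from `x` by deleting some entries,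
keeping the relative order of the remaining entries. -/
def IsSubseq {α : Type*} {m n : ℕ} (y : Fin m → α) (x : Fin n → α) : Prop :=
  ∃ g : Fin m → Fin n, StrictMono g ∧ ∀ j, y j = x (g j)

/-- The induced set `A(x)` of a tuple. -/
def inducedSet {q n : ℕ} (x : Fin n → Fin q) : Finset (Fin q) :=
  Finset.image x Finset.univ

/-- The map `Φ : x ↦ (A(x), P(x))`. -/
def Phi {q n : ℕ} (x : Fin n → Fin q) : Finset (Fin q) × Equiv.Perm (Fin n) :=
  (inducedSet x, inducedPerm x)

/-- A code `C ⊆ Σ_q^n` corrects `t` deletions if no sequence of length `n - t`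
is a common subsequence of two distinct codewords. -/
def CorrectsDeletions (q n t : ℕ) (C : Set (Fin n → Fin q)) : Prop :=
  ∀ x ∈ C, ∀ x' ∈ C, ∀ y : Fin (n - t) → Fin q, IsSubseq y x → IsSubseq y x' → x = x'

/-- A set code (family of `n`-subsets of `Σ_q`) corrects `t` deletions if no
`(n - t)`-element subset is contained in two distinct codewords. -/
def SetCodeCorrects (q n t : ℕ) (CS : Set (Finset (Fin q))) : Prop :=
  ∀ A ∈ CS, ∀ B ∈ CS, ∀ D : Finset (Fin q), D.card = n - t → D ⊆ A → D ⊆ B → A = B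

/-- A permutation code corrects `t` stable deletions if, identifying each permutation
with its word, no word of length `n - t` is a common subsequence of two distinct codewords. -/
def PermCodeCorrectsStable (n t : ℕ) (C : Set (Equiv.Perm (Fin n))) : Prop :=
  ∀ σ ∈ C, ∀ σ' ∈ C, ∀ u : Fin (n - t) → Fin n,
    IsSubseq u ⇑σ → IsSubseq u ⇑σ' → σ = σ'

/-- A permutation code corrects `t` unstable deletions if there are no two distinct
codewords `σ, σ'` with subsequences `u` of `σ` and `u'` of `σ'`, both of length `n - t`,
having the same induced permutation. -/
def PermCodeCorrectsUnstable (n t : ℕ) (C : Set (Equiv.Perm (Fin n))) : Prop :=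
  ∀ σ ∈ C, ∀ σ' ∈ C, ∀ u u' : Fin (n - t) → Fin n,
    IsSubseq u ⇑σ → IsSubseq u' ⇑σ' → inducedPerm u = inducedPerm u' → σ = σ'


lemma card_inducedSet {q n : ℕ} {x : Fin n → Fin q} (hx : Function.Injective x) :
    (inducedSet x).card = n := by
  rw [inducedSet, Finset.card_image_of_injective _ hx, Finset.card_univ, Fintype.card_fin]

lemma key_decomp {q n : ℕ} {x : Fin n → Fin q} (hx : Function.Injective x) (i : Fin n) :
    x i = (inducedSet x).orderEmbOfFin (card_inducedSet hx) (inducedPerm x i) := by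
  have hmono : Monotone (x ∘ Tuple.sort x) := Tuple.monotone_sort x
  have hsm : StrictMono (x ∘ Tuple.sort x) :=
    hmono.strictMono_of_injective (hx.comp (Tuple.sort x).injective)
  have hmem : ∀ j, (x ∘ Tuple.sort x) j ∈ inducedSet x := fun j =>
    Finset.mem_image_of_mem x (Finset.mem_univ _)
  have heq := Finset.orderEmbOfFin_unique (card_inducedSet hx) hmem hsm
  have : x i = (x ∘ Tuple.sort x) ((Tuple.sort x)⁻¹ i) := by simp
  rw [this, heq]; rfl

lemma orderEmbOfFin_congr {α : Type*} [LinearOrder α] {A B : Finset α} {n : ℕ} (h : A = B)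
    (hA : A.card = n) (hB : B.card = n) (i : Fin n) :
    A.orderEmbOfFin hA i = B.orderEmbOfFin hB i := by subst h; rfl

lemma phi_inj {q n : ℕ} {x x' : Fin n → Fin q} (hx : Function.Injective x)
    (hx' : Function.Injective x') (hA : inducedSet x = inducedSet x')
    (hP : inducedPerm x = inducedPerm x') : x = x' := by
  funext i
  rw [key_decomp hx i, key_decomp hx' i, hP,
    orderEmbOfFin_congr hA (card_inducedSet hx) (card_inducedSet hx')]

lemma sort_of_comp_monotone {q n : ℕ} {x : Fin n → Fin q} (hx : Function.Injective x)
    {σ : Equiv.Perm (Fin n)} (h : Monotone (x ∘ σ)) : Tuple.sort x = σ := by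
  symm
  rw [Tuple.eq_sort_iff]
  exact ⟨h, fun i j hij hf => absurd (σ.injective (hx hf)) hij.ne⟩

theorem stmt_4' (q n t : ℕ) (ht : 0 < t) (htn : t < n) (hnq : n ≤ q)
    (CS : Set (Finset (Fin q))) (hCSn : ∀ A ∈ CS, A.card = n)
    (hCS : ∀ A ∈ CS, ∀ B ∈ CS, ∀ D : Finset (Fin q), D.card = n - t → D ⊆ A → D ⊆ B → A = B)
    (CSD : Set (Equiv.Perm (Fin n)))
    (hCSD : ∀ σ ∈ CSD, ∀ σ' ∈ CSD, ∀ u : Fin (n - t) → Fin n,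
      IsSubseq u ⇑σ → IsSubseq u ⇑σ' → σ = σ') :
    (∀ x ∈ ({x : Fin n → Fin q | Function.Injective x} ∩ Phi ⁻¹' (CS ×ˢ CSD)),
      ∀ x' ∈ ({x : Fin n → Fin q | Function.Injective x} ∩ Phi ⁻¹' (CS ×ˢ CSD)),
      ∀ y : Fin (n - t) → Fin q, IsSubseq y x → IsSubseq y x' → x = x') ∧
    Nat.card ({x : Fin n → Fin q | Function.Injective x} ∩ Phi ⁻¹' (CS ×ˢ CSD) :
        Set (Fin n → Fin q)) = Nat.card CS * Nat.card CSD := by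
  constructor
  · intro x hx x' hx' y hy hy'
    obtain ⟨g, hg, hgy⟩ := hy
    obtain ⟨g', hg', hgy'⟩ := hy'
    have hyinj : Function.Injective y := by
      intro a b hab
      rw [hgy a, hgy b] at hab
      exact hg.injective (hx.1 hab)
    have hsub : inducedSet y ⊆ inducedSet x := by
      intro v hv
      obtain ⟨j, -, rfl⟩ := Finset.mem_image.1 hv
      rw [hgy j]
      exact Finset.mem_image_of_mem x (Finset.mem_univ _)
    have hsub' : inducedSet y ⊆ inducedSet x' := by
      intro v hv
      obtain ⟨j, -, rfl⟩ := Finset.mem_image.1 hv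
      rw [hgy' j]
      exact Finset.mem_image_of_mem x' (Finset.mem_univ _)
    have hA : inducedSet x = inducedSet x' :=
      hCS _ hx.2.1 _ hx'.2.1 (inducedSet y) (card_inducedSet hyinj) hsub hsub'
    have hval : ∀ j, inducedPerm x (g j) = inducedPerm x' (g' j) := by
      intro j
      apply ((inducedSet x').orderEmbOfFin (card_inducedSet hx'.1)).injective
      rw [← orderEmbOfFin_congr hA (card_inducedSet hx.1) (card_inducedSet hx'.1)
          (inducedPerm x (g j)),
        ← key_decomp hx.1 (g j), ← key_decomp hx'.1 (g' j), ← hgy j, ← hgy' j]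
    have hP : inducedPerm x = inducedPerm x' :=
      hCSD _ hx.2.2 _ hx'.2.2 (fun j => inducedPerm x (g j))
        ⟨g, hg, fun _ => rfl⟩ ⟨g', hg', hval⟩
    exact phi_inj hx.1 hx'.1 hA hP
  · have hbij : Function.Bijective
        (fun x : ({x : Fin n → Fin q | Function.Injective x} ∩ Phi ⁻¹' (CS ×ˢ CSD) :
            Set (Fin n → Fin q)) => (⟨Phi x.1, x.2.2⟩ : ↥(CS ×ˢ CSD))) := by
      constructor
      · rintro ⟨x, hx⟩ ⟨x', hx'⟩ h
        simp only [Subtype.mk.injEq] at h ⊢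
        exact phi_inj hx.1 hx'.1 (congrArg Prod.fst h) (congrArg Prod.snd h)
      · rintro ⟨⟨A, σ⟩, hmem⟩
        have hA : A.card = n := hCSn A hmem.1
        set x : Fin n → Fin q := fun i => A.orderEmbOfFin hA (σ i) with hxdef
        have hxinj : Function.Injective x :=
          (A.orderEmbOfFin hA).injective.comp σ.injective
        have hset : inducedSet x = A := by
          apply Finset.eq_of_subset_of_card_le
          · intro v hv
            obtain ⟨j, -, rfl⟩ := Finset.mem_image.1 hv
            exact Finset.orderEmbOfFin_mem A hA (σ j)
          · rw [card_inducedSet hxinj, hA]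
        have hperm : inducedPerm x = σ := by
          have hmono : Monotone (x ∘ ⇑σ⁻¹) := by
            have : x ∘ ⇑σ⁻¹ = ⇑(A.orderEmbOfFin hA) := funext fun i => by
              simp [hxdef]
            rw [this]
            exact (A.orderEmbOfFin hA).monotone
          rw [inducedPerm, sort_of_comp_monotone hxinj hmono, inv_inv]
        refine ⟨⟨x, hxinj, ?_⟩, ?_⟩
        · show Phi x ∈ CS ×ˢ CSD
          rw [Phi, hset, hperm]
          exact hmem
        · apply Subtype.ext
          show Phi x = (A, σ)
          rw [Phi, hset, hperm]
    rw [Nat.card_eq_of_bijective _ hbij, Nat.card_congr (Equiv.Set.prod CS CSD),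
      Nat.card_prod]

/-- If C_S is a set code of length n over Σ_q correcting t deletions, and
C_SD ⊆ S_n is a permutation code correcting t stable deletions, then
C_2 = Φ⁻¹(C_S × C_SD) ⊆ M_q^n corrects t deletions and |C_2| = |C_S| · |C_SD|. -/
theorem stmt_4 (q n t : ℕ) (ht : 0 < t) (htn : t < n) (hnq : n ≤ q)
    (CS : Set (Finset (Fin q))) (hCSn : ∀ A ∈ CS, A.card = n)
    (hCS : SetCodeCorrects q n t CS)
    (CSD : Set (Equiv.Perm (Fin n))) (hCSD : PermCodeCorrectsStable n t CSD) :
    CorrectsDeletions q n t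
        ({x : Fin n → Fin q | Function.Injective x} ∩ Phi ⁻¹' (CS ×ˢ CSD)) ∧
    Nat.card ({x : Fin n → Fin q | Function.Injective x} ∩ Phi ⁻¹' (CS ×ˢ CSD) :
        Set (Fin n → Fin q)) = Nat.card CS * Nat.card CSD := by
  exact stmt_4' q n t ht htn hnq CS hCSn hCS CSD hCSD
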